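/- arXiv:2505.21460 — 2 statements merged into one kernel-verified Lean document; each statement's English description precedes it below -/
import Mathlib

section
/- Fix a convex set $\mathcal{P} \subseteq \mathbb{R}^d$, a differentiable convex function $R : \mathcal{P} \to \mathbb{R}$, finitely supported distributions $\mathbf{x}_1, \ldots, \mathbf{x}_T$ on $\mathcal{P}$, and outcomes $y_1, \ldots, y_T \in \mathcal{P}$. Define loss functions $\ell_t(p) = D_R(y_t|p)$. Then the full swap regret equals the $D_R$-calibration error: $\sup_{\pi : \mathcal{P} \to \mathcal{P}} \sum_{t=1}^T \sum_{p} \mathbf{x}_t(p)(\ell_t(p) - \ell_t(\pi(p))) = \sum_{p} \left(\sum_{t=1}^T \mathbf{x}_t(p)\right) D_R(\nu_p | p)$, where $\nu_p = \frac{\sum_t \mathbf{x}_t(p) y_t}{\sum_t \mathbf{x}_t(p)}$ for each $p$ with $\sum_t \mathbf{x}_t(p) > 0$. -/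
/-!
For a fixed prediction `p`, the loss difference `D(y|p) - D(y|q)` is an affine function of the
outcome `y`. Averaging it over the rounds in which `p` was played with weights `x_t(p)` therefore
amounts to evaluating it at the conditional mean `ν_p`. The swap to `q` thus gains
`(∑_t x_t(p)) (D(ν_p|p) - D(ν_p|q))`, which is at most `(∑_t x_t(p)) D(ν_p|p)` since Bregman
divergences of convex functions are nonnegative, with equality at `q = ν_p`.
-/

open scoped InnerProductSpace BigOperators

noncomputable section

section Bregman

variable {E ι : Type*} [NormedAddCommGroup E] [InnerProductSpace ℝ E]

/-- The Bregman divergence `D_R(y|p)` of `R`, with `g` playing the role of `∇R`. -/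
def bregman (R : E → ℝ) (g : E → E) (y p : E) : ℝ :=
  R y - R p - ⟪g p, y - p⟫_ℝ

variable {R : E → ℝ} {g : E → E}

@[simp]
lemma bregman_self (y : E) : bregman R g y y = 0 := by
  simp [bregman]

lemma bregman_nonneg {P : Set E} (hconv : ∀ p ∈ P, ∀ y ∈ P, R p + ⟪g p, y - p⟫_ℝ ≤ R y)
    {y p : E} (hy : y ∈ P) (hp : p ∈ P) : 0 ≤ bregman R g y p := by
  have := hconv p hp y hy
  unfold bregman
  linarith

lemma bregman_sub_bregman (y ν p q : E) :
    bregman R g y p - bregman R g y q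
      = bregman R g ν p - bregman R g ν q + ⟪g q - g p, y - ν⟫_ℝ := by
  simp only [bregman, inner_sub_left, inner_sub_right]
  ring

lemma sum_mul_bregman_sub_bregman (s : Finset ι) (w : ι → ℝ) (y : ι → E) {ν : E}
    (hν : (∑ i ∈ s, w i) • ν = ∑ i ∈ s, w i • y i) (p q : E) :
    ∑ i ∈ s, w i * (bregman R g (y i) p - bregman R g (y i) q)
      = (∑ i ∈ s, w i) * (bregman R g ν p - bregman R g ν q) := by
  have hcross : ∑ i ∈ s, w i * ⟪g q - g p, y i - ν⟫_ℝ = 0 := by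
    simp only [← real_inner_smul_right, ← inner_sum, smul_sub, Finset.sum_sub_distrib,
      ← Finset.sum_smul, hν, sub_self, inner_zero_right]
  calc ∑ i ∈ s, w i * (bregman R g (y i) p - bregman R g (y i) q)
      = ∑ i ∈ s, (w i * (bregman R g ν p - bregman R g ν q) + w i * ⟪g q - g p, y i - ν⟫_ℝ) :=
        Finset.sum_congr rfl fun i _ => by rw [bregman_sub_bregman _ ν, mul_add]
    _ = (∑ i ∈ s, w i) * (bregman R g ν p - bregman R g ν q) := by
        rw [Finset.sum_add_distrib, hcross, add_zero, Finset.sum_mul]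

lemma sum_smul_eq_of_nonneg_of_pos_imp {s : Finset ι} {w : ι → ℝ} (hw : ∀ i ∈ s, 0 ≤ w i)
    {y : ι → E} {ν : E} (hν : 0 < ∑ i ∈ s, w i → (∑ i ∈ s, w i) • ν = ∑ i ∈ s, w i • y i) :
    (∑ i ∈ s, w i) • ν = ∑ i ∈ s, w i • y i := by
  rcases (Finset.sum_nonneg hw).lt_or_eq with hpos | hzero
  · exact hν hpos
  · have hw0 : ∀ i ∈ s, w i = 0 := (Finset.sum_eq_zero_iff_of_nonneg hw).mp hzero.symm
    rw [← hzero, zero_smul]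
    exact (Finset.sum_eq_zero fun i hi => by rw [hw0 i hi, zero_smul]).symm

end Bregman

theorem full_swap_regret_eq_calibration_error_general {d T : ℕ}
    (P : Set (EuclideanSpace ℝ (Fin d)))
    (R : EuclideanSpace ℝ (Fin d) → ℝ)
    (g : EuclideanSpace ℝ (Fin d) → EuclideanSpace ℝ (Fin d))
    (hconv : ∀ p ∈ P, ∀ y ∈ P, R p + ⟪g p, y - p⟫_ℝ ≤ R y)
    (D : EuclideanSpace ℝ (Fin d) → EuclideanSpace ℝ (Fin d) → ℝ)
    (hD : ∀ y q, D y q = R y - R q - ⟪g q, y - q⟫_ℝ)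
    (S : Finset (EuclideanSpace ℝ (Fin d)))
    (x : Fin T → EuclideanSpace ℝ (Fin d) → ℝ)
    (hx : ∀ t, ∀ p ∈ S, 0 ≤ x t p)
    (y : Fin T → EuclideanSpace ℝ (Fin d))
    (ν : EuclideanSpace ℝ (Fin d) → EuclideanSpace ℝ (Fin d))
    (hνP : ∀ p ∈ S, ν p ∈ P)
    (hν : ∀ p ∈ S, (0 < ∑ t, x t p) →
      (∑ t, x t p) • ν p = ∑ t, x t p • y t) :
    IsGreatest
      {r : ℝ | ∃ π : EuclideanSpace ℝ (Fin d) → EuclideanSpace ℝ (Fin d),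
        (∀ p ∈ S, π p ∈ P) ∧
        r = ∑ t, ∑ p ∈ S, x t p * (D (y t) p - D (y t) (π p))}
      (∑ p ∈ S, (∑ t, x t p) * D (ν p) p) := by
  obtain rfl : D = bregman R g := funext₂ hD
  have hswap : ∀ π : EuclideanSpace ℝ (Fin d) → EuclideanSpace ℝ (Fin d),
      ∑ t, ∑ p ∈ S, x t p * (bregman R g (y t) p - bregman R g (y t) (π p))
        = ∑ p ∈ S, (∑ t, x t p) * (bregman R g (ν p) p - bregman R g (ν p) (π p)) := by
    intro π
    rw [Finset.sum_comm]
    refine Finset.sum_congr rfl fun p hp => ?_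
    exact sum_mul_bregman_sub_bregman _ _ _
      (sum_smul_eq_of_nonneg_of_pos_imp (fun t _ => hx t p hp) (hν p hp)) _ _
  refine ⟨⟨ν, hνP, by simp [hswap]⟩, ?_⟩
  rintro r ⟨π, hπ, rfl⟩
  rw [hswap]
  refine Finset.sum_le_sum fun p hp => ?_
  have hmass : 0 ≤ ∑ t, x t p := Finset.sum_nonneg fun t _ => hx t p hp
  exact mul_le_mul_of_nonneg_left
    (sub_le_self _ (bregman_nonneg hconv (hνP p hp) (hπ p hp))) hmass

/-- With losses `ℓ_t(p) = D_R(y_t|p)`, the full swap regret of the distributions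
`x_1, …, x_T` (supported on the finite set `S ⊆ P`) equals the `D_R`-calibration error
`∑_p (∑_t x_t(p)) · D_R(ν_p | p)`, where `ν_p` is the conditional average outcome.
We express the supremum over swap functions `π : P → P` via `IsGreatest`. -/
theorem full_swap_regret_eq_calibration_error {d T : ℕ}
    (P : Set (EuclideanSpace ℝ (Fin d))) (hPconv : Convex ℝ P)
    (R : EuclideanSpace ℝ (Fin d) → ℝ)
    (g : EuclideanSpace ℝ (Fin d) → EuclideanSpace ℝ (Fin d))
    (hconv : ∀ p ∈ P, ∀ y ∈ P, R p + ⟪g p, y - p⟫_ℝ ≤ R y)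
    (D : EuclideanSpace ℝ (Fin d) → EuclideanSpace ℝ (Fin d) → ℝ)
    (hD : ∀ y q, D y q = R y - R q - ⟪g q, y - q⟫_ℝ)
    (S : Finset (EuclideanSpace ℝ (Fin d))) (hS : ↑S ⊆ P)
    (x : Fin T → EuclideanSpace ℝ (Fin d) → ℝ)
    (hx : ∀ t, ∀ p ∈ S, 0 ≤ x t p) (hx1 : ∀ t, ∑ p ∈ S, x t p = 1)
    (y : Fin T → EuclideanSpace ℝ (Fin d)) (hy : ∀ t, y t ∈ P)
    (ν : EuclideanSpace ℝ (Fin d) → EuclideanSpace ℝ (Fin d))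
    (hνP : ∀ p ∈ S, ν p ∈ P)
    (hν : ∀ p ∈ S, (0 < ∑ t, x t p) →
      (∑ t, x t p) • ν p = ∑ t, x t p • y t) :
    IsGreatest
      {r : ℝ | ∃ π : EuclideanSpace ℝ (Fin d) → EuclideanSpace ℝ (Fin d),
        (∀ p ∈ S, π p ∈ P) ∧
        r = ∑ t, ∑ p ∈ S, x t p * (D (y t) p - D (y t) (π p))}
      (∑ p ∈ S, (∑ t, x t p) * D (ν p) p) :=
  full_swap_regret_eq_calibration_error_general P R g hconv D hD S x hx y ν hνP hν
end
end

section
/- Suppose for each time $t \in [T]$ a finitely supported distribution $\mathbf{x}_t$ on a set $\mathcal{P} \subseteq \mathbb{R}^d$ is given together with an outcome $y_t \in \mathbb{R}^d$, and define the linear-loss full swap regret with respect to a finite action set $\mathcal{P}' \subseteq \mathbb{R}^d$ and best-response map $\mathsf{BR}(p) \in \arg\min_{q \in \mathcal{P}'} \langle q, p \rangle$. Let $\mathbf{x}'_t$ be the pushforward of $\mathbf{x}_t$ under $\mathsf{BR}$. Then for any norm $\|\cdot\|$ with dual norm $\|\cdot\|_\star$: $\sup_{\pi : \mathcal{P}'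 \to \mathcal{P}'} \sum_{t=1}^T \sum_{p' \in \mathcal{P}'} \mathbf{x}'_t(p') \langle y_t, p' - \pi(p') \rangle \leq \mathrm{diam}_{\|\cdot\|_\star}(\mathcal{P}') \cdot \sum_{p \in \mathcal{P}} \left(\sum_{t=1}^T \mathbf{x}_t(p)\right)\|\nu_p - p\|$, where $\nu_p = \frac{\sum_t \mathbf{x}_t(p) y_t}{\sum_t \mathbf{x}_t(p)}$. -/
open scoped InnerProductSpace BigOperators

noncomputable section

open Filter Topology

section InnerProduct

variable {E : Type*} [NormedAddCommGroup E] [InnerProductSpace ℝ E]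

/-- Hölder's inequality; testing against `(p u + ε)⁻¹ • u` and letting `ε → 0⁺` covers the case
`p u = 0` as well. -/
theorem Seminorm.inner_le_mul_of_isLUB (p : Seminorm ℝ E) {v : E} {c : ℝ}
    (hc : IsLUB {r : ℝ | ∃ s, p s ≤ 1 ∧ r = ⟪s, v⟫_ℝ} c) (u : E) :
    ⟪u, v⟫_ℝ ≤ p u * c := by
  have hε : ∀ ε > 0, ⟪u, v⟫_ℝ ≤ (p u + ε) * c := by
    intro ε hε
    have hpos : 0 < p u + ε := add_pos_of_nonneg_of_pos (apply_nonneg p u) hε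
    have hs : p ((p u + ε)⁻¹ • u) ≤ 1 := by
      rw [map_smul_eq_mul, Real.norm_eq_abs, abs_of_pos (inv_pos.mpr hpos),
        inv_mul_le_one₀ hpos]
      linarith
    calc ⟪u, v⟫_ℝ = (p u + ε) * ⟪(p u + ε)⁻¹ • u, v⟫_ℝ := by
          rw [real_inner_smul_left, mul_inv_cancel_left₀ hpos.ne']
      _ ≤ (p u + ε) * c := mul_le_mul_of_nonneg_left (hc.1 ⟨_, hs, rfl⟩) hpos.le
  have hlim : Tendsto (fun ε => (p u + ε) * c) (𝓝[>] 0) (𝓝 (p u * c)) := by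
    have hcont : Continuous fun ε => (p u + ε) * c := by fun_prop
    simpa using (hcont.tendsto 0).mono_left nhdsWithin_le_nhds
  exact ge_of_tendsto hlim (eventually_nhdsWithin_of_forall hε)

/-- Since `ν` is the `w`-weighted mean of the outcomes, the accumulated loss along `c` is the loss
at `ν`, and `⟪p, c⟫ ≤ 0` leaves only the calibration error `ν - p`. -/
theorem sum_mul_inner_le_sum_mul_inner_sub {ι : Type*} [Fintype ι] (w : ι → ℝ)
    (hw : ∀ t, 0 ≤ w t) (y : ι → E) {ν p c : E}
    (hν : 0 < ∑ t, w t → (∑ t, w t) • ν = ∑ t, w t • y t) (hpc : ⟪p, c⟫_ℝ ≤ 0) :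
    ∑ t, w t * ⟪y t, c⟫_ℝ ≤ (∑ t, w t) * ⟪ν - p, c⟫_ℝ := by
  rcases (Finset.sum_nonneg fun t _ => hw t).eq_or_lt with hzero | hpos
  · have hw0 : ∀ t, w t = 0 := fun t =>
      (Finset.sum_eq_zero_iff_of_nonneg fun t _ => hw t).1 hzero.symm t (Finset.mem_univ t)
    simp [hw0]
  · calc ∑ t, w t * ⟪y t, c⟫_ℝ = (∑ t, w t) * ⟪ν, c⟫_ℝ := by
          simp only [← real_inner_smul_left, ← sum_inner, hν hpos]
      _ = (∑ t, w t) * (⟪ν - p, c⟫_ℝ + ⟪p, c⟫_ℝ) := by rw [← inner_add_left, sub_add_cancel]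
      _ ≤ (∑ t, w t) * ⟪ν - p, c⟫_ℝ := mul_le_mul_of_nonneg_left (by linarith) hpos.le

end InnerProduct

theorem swap_regret_le_diam_mul_calibration_general {d T : ℕ}
    (S : Finset (EuclideanSpace ℝ (Fin d)))
    (x : Fin T → EuclideanSpace ℝ (Fin d) → ℝ)
    (hx : ∀ t, ∀ p ∈ S, 0 ≤ x t p)
    (y : Fin T → EuclideanSpace ℝ (Fin d))
    (N Nstar : EuclideanSpace ℝ (Fin d) → ℝ)
    (hN_add : ∀ a b, N (a + b) ≤ N a + N b)
    (hN_smul : ∀ (c : ℝ) a, N (c • a) = |c| * N a)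
    (hNstar : ∀ v, IsLUB {r : ℝ | ∃ s, N s ≤ 1 ∧ r = ⟪s, v⟫_ℝ} (Nstar v))
    (P' : Finset (EuclideanSpace ℝ (Fin d)))
    (BR : EuclideanSpace ℝ (Fin d) → EuclideanSpace ℝ (Fin d))
    (hBR : ∀ p, BR p ∈ P' ∧ ∀ q ∈ P', ⟪BR p, p⟫_ℝ ≤ ⟪q, p⟫_ℝ)
    (diam : ℝ) (hdiam : ∀ q ∈ P', ∀ q' ∈ P', Nstar (q - q') ≤ diam)
    (ν : EuclideanSpace ℝ (Fin d) → EuclideanSpace ℝ (Fin d))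
    (hν : ∀ p ∈ S, (0 < ∑ t, x t p) →
      (∑ t, x t p) • ν p = ∑ t, x t p • y t)
    (π : EuclideanSpace ℝ (Fin d) → EuclideanSpace ℝ (Fin d))
    (hπ : ∀ q ∈ P', π q ∈ P') :
    ∑ t, ∑ p ∈ S, x t p * ⟪y t, BR p - π (BR p)⟫_ℝ ≤
      diam * ∑ p ∈ S, (∑ t, x t p) * N (ν p - p) := by
  let n : Seminorm ℝ (EuclideanSpace ℝ (Fin d)) := Seminorm.of N hN_add (by simpa using hN_smul)
  rw [Finset.sum_comm, Finset.mul_sum]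
  refine Finset.sum_le_sum fun p hp => ?_
  obtain ⟨hBR_mem, hBR_min⟩ := hBR p
  have hswap_mem := hπ _ hBR_mem
  have hbest : ⟪p, BR p - π (BR p)⟫_ℝ ≤ 0 := by
    rw [inner_sub_right, real_inner_comm (BR p), real_inner_comm (π (BR p))]
    linarith [hBR_min _ hswap_mem]
  have hweight : 0 ≤ ∑ t, x t p := Finset.sum_nonneg fun t _ => hx t p hp
  calc ∑ t, x t p * ⟪y t, BR p - π (BR p)⟫_ℝ
      ≤ (∑ t, x t p) * ⟪ν p - p, BR p - π (BR p)⟫_ℝ :=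
        sum_mul_inner_le_sum_mul_inner_sub _ (fun t => hx t p hp) y (hν p hp) hbest
    _ ≤ (∑ t, x t p) * (N (ν p - p) * Nstar (BR p - π (BR p))) :=
        mul_le_mul_of_nonneg_left (n.inner_le_mul_of_isLUB (hNstar _) _) hweight
    _ ≤ (∑ t, x t p) * (N (ν p - p) * diam) := by
        gcongr
        · exact apply_nonneg n _
        · exact hdiam _ hBR_mem _ hswap_mem
    _ = diam * ((∑ t, x t p) * N (ν p - p)) := by ring

/-- Best-responding to calibrated forecasts yields small linear-loss full swap
regret: for the pushforward distributions under the best-response map `BR`, the swap regret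
against any swap function `π : P' → P'` is at most
`diam_{‖·‖⋆}(P') · ∑_p (∑_t x_t(p)) ‖ν_p - p‖`.
Here `N` is a norm on `ℝ^d` and `Nstar` its dual norm (given as a least upper bound). -/
theorem swap_regret_le_diam_mul_calibration {d T : ℕ}
    (P : Set (EuclideanSpace ℝ (Fin d)))
    (S : Finset (EuclideanSpace ℝ (Fin d))) (hS : ↑S ⊆ P)
    (x : Fin T → EuclideanSpace ℝ (Fin d) → ℝ)
    (hx : ∀ t, ∀ p ∈ S, 0 ≤ x t p) (hx1 : ∀ t, ∑ p ∈ S, x t p = 1)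
    (y : Fin T → EuclideanSpace ℝ (Fin d))
    (N Nstar : EuclideanSpace ℝ (Fin d) → ℝ)
    (hN_add : ∀ a b, N (a + b) ≤ N a + N b)
    (hN_smul : ∀ (c : ℝ) a, N (c • a) = |c| * N a)
    (hN_def : ∀ a, N a = 0 → a = 0)
    (hNstar : ∀ v, IsLUB {r : ℝ | ∃ s, N s ≤ 1 ∧ r = ⟪s, v⟫_ℝ} (Nstar v))
    (P' : Finset (EuclideanSpace ℝ (Fin d))) (hP' : P'.Nonempty)
    (BR : EuclideanSpace ℝ (Fin d) → EuclideanSpace ℝ (Fin d))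
    (hBR : ∀ p, BR p ∈ P' ∧ ∀ q ∈ P', ⟪BR p, p⟫_ℝ ≤ ⟪q, p⟫_ℝ)
    (diam : ℝ) (hdiam : ∀ q ∈ P', ∀ q' ∈ P', Nstar (q - q') ≤ diam)
    (ν : EuclideanSpace ℝ (Fin d) → EuclideanSpace ℝ (Fin d))
    (hν : ∀ p ∈ S, (0 < ∑ t, x t p) →
      (∑ t, x t p) • ν p = ∑ t, x t p • y t)
    (π : EuclideanSpace ℝ (Fin d) → EuclideanSpace ℝ (Fin d))
    (hπ : ∀ q ∈ P', π q ∈ P') :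
    ∑ t, ∑ p ∈ S, x t p * ⟪y t, BR p - π (BR p)⟫_ℝ ≤
      diam * ∑ p ∈ S, (∑ t, x t p) * N (ν p - p) :=
  swap_regret_le_diam_mul_calibration_general S x hx y N Nstar hN_add hN_smul hNstar P' BR hBR diam
    hdiam ν hν π hπ
end
end
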